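/- Let n ≥ 2 be a natural number. The ring ℤ/nℤ of integers modulo n is weak nil clean but not nil clean if and only if n = 2^r · 3^t for some natural numbers r ≥ 0 and t ≥ 1. -/

import Mathlib

/-- A ring is weak nil clean if every element is the sum or difference of a
nilpotent and an idempotent. -/
def WeakNilClean (R : Type*) [Ring R] : Prop :=
  ∀ x : R, ∃ n e : R, IsNilpotent n ∧ IsIdempotentElem e ∧ (x = n + e ∨ x = n - e)

/-- A ring is nil clean if every element is the sum of a nilpotent and an idempotent. -/
def NilClean (R : Type*) [Ring R] : Prop :=
  ∀ x : R, ∃ n e : R, IsNilpotent n ∧ IsIdempotentElem e ∧ x = n + e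

/-!
In a domain the only nilpotent is `0` and the only idempotents are `0` and `1`, so in
`ZMod p` weak nil cleanness forces `2 ∈ {0, 1, -1}`, i.e. `p ∣ 2` or `p ∣ 3`, while nil
cleanness fails in `ZMod 3` already for `2`. Conversely, modulo the nilpotent element `p` of
`ZMod (p ^ k)` every residue is `0` or `1` when `p = 2` and `0`, `1` or `-1` when `p = 3`.
By the Chinese remainder theorem `ZMod (2 ^ r * 3 ^ t)` is the product of these two rings, and
a nil clean ring is also "nil clean with a minus sign" (apply nil cleanness to `-x`), so its
component can follow the sign chosen in the weak nil clean component.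
-/

section Rings

variable {R S : Type*} [Ring R] [Ring S]

theorem NilClean.of_surjective (f : R →+* S) (hf : Function.Surjective f) (h : NilClean R) :
    NilClean S := by
  intro y
  obtain ⟨x, rfl⟩ := hf y
  obtain ⟨n, e, hn, he, rfl⟩ := h x
  exact ⟨f n, f e, hn.map f, he.map f, map_add f n e⟩

theorem WeakNilClean.of_surjective (f : R →+* S) (hf : Function.Surjective f)
    (h : WeakNilClean R) : WeakNilClean S := by
  intro y
  obtain ⟨x, rfl⟩ := hf y
  obtain ⟨n, e, hn, he, rfl | rfl⟩ := h x
  · exact ⟨f n, f e, hn.map f, he.map f, .inl (map_add f n e)⟩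
  · exact ⟨f n, f e, hn.map f, he.map f, .inr (map_sub f n e)⟩

theorem NilClean.exists_eq_sub (h : NilClean R) (x : R) :
    ∃ n e : R, IsNilpotent n ∧ IsIdempotentElem e ∧ x = n - e := by
  obtain ⟨n, e, hn, he, hx⟩ := h (-x)
  exact ⟨-n, e, hn.neg, he, by rw [← neg_neg x, hx]; abel⟩

theorem IsNilpotent.prodMk {a : R} {b : S} (ha : IsNilpotent a) (hb : IsNilpotent b) :
    IsNilpotent (a, b) := by
  obtain ⟨i, hi⟩ := ha
  obtain ⟨j, hj⟩ := hb
  exact ⟨max i j, Prod.ext (pow_eq_zero_of_le (le_max_left i j) hi)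
    (pow_eq_zero_of_le (le_max_right i j) hj)⟩

theorem IsIdempotentElem.prodMk {a : R} {b : S} (ha : IsIdempotentElem a)
    (hb : IsIdempotentElem b) : IsIdempotentElem (a, b) :=
  Prod.ext ha hb

theorem WeakNilClean.prod_of_nilClean (hR : NilClean R) (hS : WeakNilClean S) :
    WeakNilClean (R × S) := by
  rintro ⟨x, y⟩
  obtain ⟨m, f, hm, hf, rfl | rfl⟩ := hS y
  · obtain ⟨n, e, hn, he, rfl⟩ := hR x
    exact ⟨(n, m), (e, f), hn.prodMk hm, he.prodMk hf, .inl rfl⟩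
  · obtain ⟨n, e, hn, he, rfl⟩ := hR.exists_eq_sub x
    exact ⟨(n, m), (e, f), hn.prodMk hm, he.prodMk hf, .inr rfl⟩

variable [IsDomain R]

theorem NilClean.eq_zero_or_eq_one (h : NilClean R) (x : R) : x = 0 ∨ x = 1 := by
  obtain ⟨n, e, hn, he, rfl⟩ := h x
  rw [hn.eq_zero, zero_add]
  exact IsIdempotentElem.iff_eq_zero_or_one.mp he

theorem WeakNilClean.eq_zero_or_eq_one_or_eq_neg_one (h : WeakNilClean R) (x : R) :
    x = 0 ∨ x = 1 ∨ x = -1 := by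
  obtain ⟨n, e, hn, he, rfl | rfl⟩ := h x <;> rw [hn.eq_zero] <;>
    rcases IsIdempotentElem.iff_eq_zero_or_one.mp he with rfl | rfl <;> simp

end Rings

namespace ZMod

theorem isNilpotent_natCast_mul (p k : ℕ) (y : ZMod (p ^ k)) :
    IsNilpotent ((p : ZMod (p ^ k)) * y) :=
  (Commute.all _ _).isNilpotent_mul_right ⟨k, by rw [← Nat.cast_pow, natCast_self]⟩

theorem nilClean_two_pow (r : ℕ) : NilClean (ZMod (2 ^ r)) := by
  intro x
  obtain ⟨k, rfl⟩ := intCast_surjective x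
  obtain ⟨q, rfl | rfl⟩ : ∃ q, k = 2 * q ∨ k = 2 * q + 1 := ⟨k / 2, by omega⟩
  · exact ⟨_, 0, isNilpotent_natCast_mul 2 r q, .zero, by push_cast; ring⟩
  · exact ⟨_, 1, isNilpotent_natCast_mul 2 r q, .one, by push_cast; ring⟩

theorem weakNilClean_three_pow (t : ℕ) : WeakNilClean (ZMod (3 ^ t)) := by
  intro x
  obtain ⟨k, rfl⟩ := intCast_surjective x
  obtain ⟨q, rfl | rfl | rfl⟩ : ∃ q, k = 3 * q ∨ k = 3 * q + 1 ∨ k = 3 * q - 1 :=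
    ⟨(k + 1) / 3, by omega⟩
  · exact ⟨_, 0, isNilpotent_natCast_mul 3 t q, .zero, .inl (by push_cast; ring)⟩
  · exact ⟨_, 1, isNilpotent_natCast_mul 3 t q, .one, .inl (by push_cast; ring)⟩
  · exact ⟨_, 1, isNilpotent_natCast_mul 3 t q, .one, .inr (by push_cast; ring)⟩

theorem weakNilClean_two_pow_mul_three_pow (r t : ℕ) : WeakNilClean (ZMod (2 ^ r * 3 ^ t)) :=
  let crt := chineseRemainder (Nat.Coprime.pow r t (by norm_num : Nat.Coprime 2 3))
  ((weakNilClean_three_pow t).prod_of_nilClean (nilClean_two_pow r)).of_surjective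
    crt.symm.toRingHom crt.symm.surjective

theorem not_nilClean_of_three_dvd {n : ℕ} (h : 3 ∣ n) : ¬ NilClean (ZMod n) := fun hn ↦
  absurd ((hn.of_surjective (castHom h (ZMod 3)) (ringHom_surjective _)).eq_zero_or_eq_one 2)
    (by decide)

theorem prime_eq_two_or_three_of_weakNilClean {n p : ℕ} (h : WeakNilClean (ZMod n))
    (hp : p.Prime) (hpn : p ∣ n) : p = 2 ∨ p = 3 := by
  have := Fact.mk hp
  rcases (h.of_surjective (castHom hpn (ZMod p)) (ringHom_surjective _))
    |>.eq_zero_or_eq_one_or_eq_neg_one 2 with h2 | h2 | h2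
  · refine .inl ((Nat.prime_dvd_prime_iff_eq hp Nat.prime_two).mp ?_)
    exact (natCast_eq_zero_iff 2 p).mp (by exact_mod_cast h2)
  · exact absurd (by linear_combination h2 : (1 : ZMod p) = 0) one_ne_zero
  · refine .inr ((Nat.prime_dvd_prime_iff_eq hp Nat.prime_three).mp ?_)
    exact (natCast_eq_zero_iff 3 p).mp (by push_cast; linear_combination h2)

end ZMod

theorem Nat.exists_eq_two_pow_mul_three_pow {n : ℕ}
    (h : ∀ p, p.Prime → p ∣ n → p = 2 ∨ p = 3) :
    ∃ r t, n = 2 ^ r * 3 ^ t := by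
  have hn : n ≠ 0 := by
    rintro rfl
    simpa using h 5 (by norm_num) (dvd_zero 5)
  have hsupp : n.factorization.support ⊆ {2, 3} := fun p hp ↦ by
    rw [support_factorization, mem_primeFactors] at hp
    simpa using h p hp.1 hp.2.1
  refine ⟨n.factorization 2, n.factorization 3, ?_⟩
  conv_lhs => rw [← prod_factorization_pow_eq_self hn]
  rw [Finsupp.prod_of_support_subset _ hsupp _ (by simp), Finset.prod_pair (by norm_num)]

theorem stmt_7_general (n : ℕ) :
    (WeakNilClean (ZMod n) ∧ ¬ NilClean (ZMod n)) ↔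
      ∃ r t : ℕ, 1 ≤ t ∧ n = 2 ^ r * 3 ^ t := by
  constructor
  · rintro ⟨hweak, hnot⟩
    obtain ⟨r, t, rfl⟩ := Nat.exists_eq_two_pow_mul_three_pow
      fun p hp hpn ↦ ZMod.prime_eq_two_or_three_of_weakNilClean hweak hp hpn
    refine ⟨r, t, Nat.one_le_iff_ne_zero.mpr fun ht ↦ hnot ?_, rfl⟩
    rw [ht, pow_zero, mul_one]
    exact ZMod.nilClean_two_pow r
  · rintro ⟨r, t, ht, rfl⟩
    exact ⟨ZMod.weakNilClean_two_pow_mul_three_pow r t,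
      ZMod.not_nilClean_of_three_dvd (Dvd.dvd.mul_left (dvd_pow_self 3 (by omega)) _)⟩

theorem stmt_7 (n : ℕ) (hn : 2 ≤ n) :
    (WeakNilClean (ZMod n) ∧ ¬ NilClean (ZMod n)) ↔
      ∃ r t : ℕ, 1 ≤ t ∧ n = 2 ^ r * 3 ^ t :=
  stmt_7_general n
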